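/- Fix dead time τ > 0 and background intensity Λ0 > 0, and regard μ*(A) and F as functions of the peak power A > 0. Then as A → 0⁺ the non-perfect receiver capacity satisfies (1/τ)·F(μ*(A)) = d_τ·A² + o(A²) with d_τ = τ·(1−p(Λ0))/(8·p(Λ0)); that is, ((1/τ)·F(μ*(A)) − d_τ·A²)/A² → 0 as A → 0⁺. Moreover, the continuous Poisson channel capacity C_Poi(A) = A·[q*·(1+s)·ln(1+s) + (1−q*)·s·ln s − (q*+s)·ln(q*+s)], where s = Λ0/A and q* = (1+s)^{1+s}/(s^s·e) − s, satisfies C_Poi(A) = A²/(8·Λ0) + o(A²) as A → 0⁺. -/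

import Mathlib

/-- p(x) = 1 − exp(−x·τ), the detection probability over a dead time τ. -/
noncomputable def pdet (τ x : ℝ) : ℝ := 1 - Real.exp (-(x * τ))

/-- Binary entropy h_b(x) = −x·ln x − (1−x)·ln(1−x) (with 0·ln 0 = 0). -/
noncomputable def hb (x : ℝ) : ℝ := -(x * Real.log x) - (1 - x) * Real.log (1 - x)

/-- F(μ) = h_b((1−μ)·p(Λ0) + μ·p(A+Λ0)) − (1−μ)·h_b(p(Λ0)) − μ·h_b(p(A+Λ0)). -/
noncomputable def Fcap (τ A Λ0 μ : ℝ) : ℝ :=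
  hb ((1 - μ) * pdet τ Λ0 + μ * pdet τ (A + Λ0)) -
    (1 - μ) * hb (pdet τ Λ0) - μ * hb (pdet τ (A + Λ0))

/-- a = exp(−(h_b(p(A+Λ0)) − h_b(p(Λ0)))/(p(A+Λ0) − p(Λ0))). -/
noncomputable def aCoef (τ A Λ0 : ℝ) : ℝ :=
  Real.exp (-((hb (pdet τ (A + Λ0)) - hb (pdet τ Λ0)) /
    (pdet τ (A + Λ0) - pdet τ Λ0)))

/-- μ* = (a/(1+a) − p(Λ0))/(p(A+Λ0) − p(Λ0)), the optimal duty cycle. -/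
noncomputable def muStar (τ A Λ0 : ℝ) : ℝ :=
  (aCoef τ A Λ0 / (1 + aCoef τ A Λ0) - pdet τ Λ0) / (pdet τ (A + Λ0) - pdet τ Λ0)

section AuxCapacity

open Filter Real Set Topology

lemma taylor2 {f f' : ℝ → ℝ} {c m : ℝ}
    (hf : ∀ᶠ x in nhds c, HasDerivAt f (f' x) x)
    (hfc : f c = 0) (hf'c : f' c = 0) (hf'' : HasDerivAt f' m c) :
    Tendsto (fun x => f x / (x - c) ^ 2) (nhdsWithin c (Ioi c)) (nhds (m / 2)) := by
  have hg : ∀ x : ℝ, HasDerivAt (fun y : ℝ => (y - c) ^ 2) (2 * (x - c)) x := by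
    intro x
    have := ((hasDerivAt_id x).sub_const c).pow 2
    simpa [mul_comm, Pi.pow_def] using this
  apply HasDerivAt.lhopital_zero_nhdsGT
  · exact nhdsWithin_le_nhds hf
  · exact Eventually.of_forall hg
  · filter_upwards [self_mem_nhdsWithin] with x hx
    have : (0:ℝ) < x - c := sub_pos.2 hx
    positivity
  · have hcont : ContinuousAt f c := hf.self_of_nhds.continuousAt
    simpa [hfc] using (hcont.tendsto.mono_left nhdsWithin_le_nhds)
  · have : Tendsto (fun x : ℝ => (x - c) ^ 2) (nhds c) (nhds ((c - c)^2)) := by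
      exact ((continuous_id.sub continuous_const).pow 2).tendsto c
    simpa using this.mono_left nhdsWithin_le_nhds
  · have hs : Tendsto (slope f' c) (nhdsWithin c {c}ᶜ) (nhds m) :=
      hasDerivAt_iff_tendsto_slope.mp hf''
    have hs2 : Tendsto (fun x => slope f' c x / 2) (nhdsWithin c (Ioi c)) (nhds (m / 2)) :=
      (hs.mono_left (nhdsWithin_mono c fun x hx => ne_of_gt hx)).div_const 2
    apply hs2.congr'
    filter_upwards [self_mem_nhdsWithin] with x hx
    have hne : x - c ≠ 0 := ne_of_gt (sub_pos.2 hx)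
    rw [slope_def_field, hf'c, sub_zero, div_div, mul_comm]

lemma limD : Filter.Tendsto (fun u : ℝ => ((1 + u) * Real.log (1 + u) - u) / u ^ 2)
    (nhdsWithin 0 (Ioi 0)) (nhds (1 / 2)) := by
  have hf : ∀ᶠ u in nhds (0:ℝ),
      HasDerivAt (fun u : ℝ => (1 + u) * Real.log (1 + u) - u) (Real.log (1 + u)) u := by
    filter_upwards [Ioi_mem_nhds (by norm_num : (-1:ℝ) < 0)] with u hu
    have h1u : (1:ℝ) + u ≠ 0 := by
      have : (0:ℝ) < 1 + u := by linarith [mem_Ioi.mp hu]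
      exact ne_of_gt this
    have h1 : HasDerivAt (fun u : ℝ => (1 + u) * Real.log (1 + u))
        (Real.log (1 + u) + 1) u := by
      have hin : HasDerivAt (fun u : ℝ => 1 + u) 1 u := (hasDerivAt_id u).const_add 1
      have := (Real.hasDerivAt_mul_log h1u).comp u hin
      simpa [Function.comp_def] using this
    have := h1.sub (hasDerivAt_id u)
    simpa [Pi.sub_def] using this
  have hf'' : HasDerivAt (fun u : ℝ => Real.log (1 + u)) 1 0 := by
    have hin : HasDerivAt (fun u : ℝ => 1 + u) 1 0 := (hasDerivAt_id 0).const_add 1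
    have := (Real.hasDerivAt_log (by norm_num : (1:ℝ) + 0 ≠ 0)).comp 0 hin
    simpa [Function.comp_def] using this
  have := taylor2 hf (by simp) (by simp) hf''
  simpa using this

lemma limE : Filter.Tendsto (fun w : ℝ => (Real.exp w - 1 - w) / w ^ 2)
    (nhdsWithin 0 (Ioi 0)) (nhds (1 / 2)) := by
  have hf : ∀ᶠ w in nhds (0:ℝ),
      HasDerivAt (fun w : ℝ => Real.exp w - 1 - w) (Real.exp w - 1) w := by
    filter_upwards with w
    have := ((Real.hasDerivAt_exp w).sub_const 1).sub (hasDerivAt_id w)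
    simpa [Pi.sub_def] using this
  have hf'' : HasDerivAt (fun w : ℝ => Real.exp w - 1) 1 0 := by
    have := (Real.hasDerivAt_exp 0).sub_const 1
    simpa using this
  have := taylor2 hf (by simp) (by simp) hf''
  simpa using this

lemma slope_lim {f : ℝ → ℝ} {d : ℝ} (hf : HasDerivAt f d 0) (hf0 : f 0 = 0) :
    Filter.Tendsto (fun x => f x / x) (nhdsWithin 0 (Ioi 0)) (nhds d) := by
  have hs : Filter.Tendsto (slope f 0) (nhdsWithin 0 {(0:ℝ)}ᶜ) (nhds d) :=
    hasDerivAt_iff_tendsto_slope.mp hf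
  have := hs.mono_left (nhdsWithin_mono 0 fun x hx => ne_of_gt hx)
  refine this.congr ?_
  intro x
  simp [slope_def_field, hf0]

lemma tendsto_div_pos {c : ℝ} (hc : 0 < c) :
    Filter.Tendsto (fun A : ℝ => A / c) (nhdsWithin 0 (Ioi 0)) (nhdsWithin 0 (Ioi 0)) := by
  rw [tendsto_nhdsWithin_iff]
  constructor
  · have : Filter.Tendsto (fun A : ℝ => A / c) (nhds 0) (nhds (0 / c)) :=
      (continuous_id.div_const c).tendsto 0
    simpa using this.mono_left nhdsWithin_le_nhds
  · filter_upwards [self_mem_nhdsWithin] with x hx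
    exact div_pos hx hc

lemma cpoi_eq (Λ0 : ℝ) (hΛ0 : 0 < Λ0) (A : ℝ) (hA : 0 < A) :
    A * (((1 + Λ0 / A) ^ (1 + Λ0 / A) / ((Λ0 / A) ^ (Λ0 / A) * Real.exp 1) - Λ0 / A) *
          (1 + Λ0 / A) * Real.log (1 + Λ0 / A) +
        (1 - ((1 + Λ0 / A) ^ (1 + Λ0 / A) / ((Λ0 / A) ^ (Λ0 / A) * Real.exp 1) -
          Λ0 / A)) * (Λ0 / A) * Real.log (Λ0 / A) -
        (((1 + Λ0 / A) ^ (1 + Λ0 / A) / ((Λ0 / A) ^ (Λ0 / A) * Real.exp 1) - Λ0 / A) +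
          Λ0 / A) *
          Real.log (((1 + Λ0 / A) ^ (1 + Λ0 / A) / ((Λ0 / A) ^ (Λ0 / A) * Real.exp 1) -
            Λ0 / A) + Λ0 / A)) =
    Λ0 * (Real.exp ((1 + Λ0 / A) * Real.log (1 + A / Λ0) - 1) - 1 -
      ((1 + Λ0 / A) * Real.log (1 + A / Λ0) - 1)) := by
  set s := Λ0 / A with hs_def
  have hs : 0 < s := div_pos hΛ0 hA
  have h1s : 0 < 1 + s := by linarith
  have hE : (1 + s) ^ (1 + s) / (s ^ s * Real.exp 1) =
      Real.exp ((1 + s) * Real.log (1 + s) - (s * Real.log s + 1)) := by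
    rw [Real.rpow_def_of_pos h1s, Real.rpow_def_of_pos hs, ← Real.exp_add, ← Real.exp_sub]
    congr 1
    ring
  have hlog1u : Real.log (1 + A / Λ0) = Real.log (1 + s) - Real.log s := by
    have h : 1 + A / Λ0 = (1 + s) / s := by
      rw [hs_def]
      field_simp
      ring
    rw [h, Real.log_div (ne_of_gt h1s) (ne_of_gt hs)]
  have hcan : Real.exp ((1 + s) * Real.log (1 + s) - (s * Real.log s + 1)) - s + s =
      Real.exp ((1 + s) * Real.log (1 + s) - (s * Real.log s + 1)) := by ring
  rw [hE, hlog1u, hcan, Real.log_exp]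
  have hAs : A * s = Λ0 := by
    rw [hs_def]
    field_simp
  have hsw : Real.exp ((1 + s) * Real.log (1 + s) - (s * Real.log s + 1)) =
      s * Real.exp ((1 + s) * (Real.log (1 + s) - Real.log s) - 1) := by
    rw [← Real.exp_log hs, ← Real.exp_add]
    · congr 1
      rw [Real.log_exp]
      ring
  rw [hsw]
  linear_combination (Real.exp ((1 + s) * (Real.log (1 + s) - Real.log s) - 1) -
    (1 + s) * (Real.log (1 + s) - Real.log s)) * hAs

lemma part2 (Λ0 : ℝ) (hΛ0 : 0 < Λ0) (CPoi : ℝ → ℝ)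
    (hCPoi : ∀ A : ℝ,
      CPoi A =
        A * (((1 + Λ0 / A) ^ (1 + Λ0 / A) / ((Λ0 / A) ^ (Λ0 / A) * Real.exp 1) - Λ0 / A) *
              (1 + Λ0 / A) * Real.log (1 + Λ0 / A) +
            (1 - ((1 + Λ0 / A) ^ (1 + Λ0 / A) / ((Λ0 / A) ^ (Λ0 / A) * Real.exp 1) -
              Λ0 / A)) * (Λ0 / A) * Real.log (Λ0 / A) -
            (((1 + Λ0 / A) ^ (1 + Λ0 / A) / ((Λ0 / A) ^ (Λ0 / A) * Real.exp 1) - Λ0 / A) +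
              Λ0 / A) *
              Real.log (((1 + Λ0 / A) ^ (1 + Λ0 / A) / ((Λ0 / A) ^ (Λ0 / A) * Real.exp 1) -
                Λ0 / A) + Λ0 / A))) :
    Filter.Tendsto (fun A : ℝ => (CPoi A - A ^ 2 / (8 * Λ0)) / A ^ 2)
        (nhdsWithin 0 (Set.Ioi 0)) (nhds 0) := by
  have hΛ0' : Λ0 ≠ 0 := ne_of_gt hΛ0
  set w : ℝ → ℝ := fun A => (1 + Λ0 / A) * Real.log (1 + A / Λ0) - 1 with hw_def
  set D : ℝ → ℝ := fun u => ((1 + u) * Real.log (1 + u) - u) / u ^ 2 with hD_def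
  have hCP : ∀ A : ℝ, 0 < A → CPoi A = Λ0 * (Real.exp (w A) - 1 - w A) := by
    intro A hA
    rw [hCPoi A, cpoi_eq Λ0 hΛ0 A hA]
  have hwD : ∀ A : ℝ, 0 < A → w A = D (A / Λ0) * (A / Λ0) := by
    intro A hA
    have hA' : A ≠ 0 := ne_of_gt hA
    rw [hw_def, hD_def]
    field_simp
    ring
  have hDlim : Filter.Tendsto (fun A : ℝ => D (A / Λ0)) (nhdsWithin 0 (Ioi 0)) (nhds (1 / 2)) :=
    limD.comp (tendsto_div_pos hΛ0)
  have hulim : Filter.Tendsto (fun A : ℝ => A / Λ0) (nhdsWithin 0 (Ioi 0)) (nhds 0) :=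
    (tendsto_div_pos hΛ0).mono_right nhdsWithin_le_nhds
  have hDpos : ∀ᶠ A in nhdsWithin (0:ℝ) (Ioi 0), 0 < D (A / Λ0) :=
    hDlim.eventually (eventually_gt_nhds (by norm_num))
  have hw0 : Filter.Tendsto w (nhdsWithin 0 (Ioi 0)) (nhdsWithin 0 (Ioi 0)) := by
    rw [tendsto_nhdsWithin_iff]
    constructor
    · have h := hDlim.mul hulim
      rw [mul_zero] at h
      refine h.congr' ?_
      filter_upwards [self_mem_nhdsWithin] with A hA
      exact (hwD A hA).symm
    · filter_upwards [self_mem_nhdsWithin, hDpos] with A hA hD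
      rw [hwD A hA]
      exact mul_pos hD (div_pos hA hΛ0)
  have hElim : Filter.Tendsto (fun A : ℝ => (Real.exp (w A) - 1 - w A) / (w A) ^ 2)
      (nhdsWithin 0 (Ioi 0)) (nhds (1 / 2)) := limE.comp hw0
  have hwpos : ∀ᶠ A in nhdsWithin (0:ℝ) (Ioi 0), 0 < w A :=
    (tendsto_nhdsWithin_iff.mp hw0).2
  have hmain : Filter.Tendsto (fun A : ℝ => CPoi A / A ^ 2) (nhdsWithin 0 (Ioi 0))
      (nhds (1 / (8 * Λ0))) := by
    have h := (hElim.mul (hDlim.mul hDlim)).div_const Λ0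
    have hval : (1 / 2 : ℝ) * (1 / 2 * (1 / 2)) / Λ0 = 1 / (8 * Λ0) := by ring
    rw [hval] at h
    refine h.congr' ?_
    filter_upwards [self_mem_nhdsWithin, hwpos] with A hA hw
    have hA' : (A:ℝ) ≠ 0 := ne_of_gt hA
    have hw' : w A ≠ 0 := ne_of_gt hw
    have hD_eq : D (A / Λ0) = Λ0 * w A / A := by
      rw [hwD A hA]
      field_simp
    rw [hCP A hA, hD_eq]
    field_simp
  have h := hmain.sub_const (1 / (8 * Λ0))
  rw [sub_self] at h
  refine h.congr' ?_
  filter_upwards [self_mem_nhdsWithin] with A hA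
  have hA' : (A:ℝ) ≠ 0 := ne_of_gt hA
  rw [sub_div]
  congr 1
  field_simp

lemma hb_deriv {x : ℝ} (h0 : 0 < x) (h1 : x < 1) :
    HasDerivAt hb (Real.log (1 - x) - Real.log x) x := by
  have h1x : (1:ℝ) - x ≠ 0 := by linarith
  have ha : HasDerivAt (fun y : ℝ => y * Real.log y) (Real.log x + 1) x :=
    Real.hasDerivAt_mul_log (ne_of_gt h0)
  have hbd : HasDerivAt (fun y : ℝ => (1 - y) * Real.log (1 - y))
      (-(Real.log (1 - x) + 1)) x := by
    have hin : HasDerivAt (fun y : ℝ => 1 - y) (-1) x := (hasDerivAt_id x).const_sub 1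
    have := (Real.hasDerivAt_mul_log h1x).comp x hin
    simpa [Function.comp_def] using this
  have h := ha.neg.sub hbd
  have : HasDerivAt (fun y : ℝ => -(y * Real.log y) - (1 - y) * Real.log (1 - y))
      (Real.log (1 - x) - Real.log x) x := by
    refine h.congr_deriv ?_
    ring
  exact this

lemma limB (p0 : ℝ) (h0 : 0 < p0) (h1 : p0 < 1) :
    Filter.Tendsto (fun x => (hb x - hb p0 - (x - p0) * (Real.log (1 - p0) - Real.log p0)) /
        (x - p0) ^ 2)
      (nhdsWithin p0 (Ioi p0)) (nhds ((-(1 / (1 - p0)) - 1 / p0) / 2)) := by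
  have h1p : (0:ℝ) < 1 - p0 := by linarith
  apply taylor2 (f' := fun x => (Real.log (1 - x) - Real.log x) -
      (Real.log (1 - p0) - Real.log p0))
  · filter_upwards [Ioo_mem_nhds h0 h1] with x hx
    have hd := hb_deriv hx.1 hx.2
    have hlin : HasDerivAt (fun x : ℝ => (x - p0) * (Real.log (1 - p0) - Real.log p0))
        (Real.log (1 - p0) - Real.log p0) x := by
      have := ((hasDerivAt_id x).sub_const p0).mul_const (Real.log (1 - p0) - Real.log p0)
      simpa using this
    exact (hd.sub_const (hb p0)).sub hlin
  · simp
  · simp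
  · have hl1 : HasDerivAt (fun x : ℝ => Real.log (1 - x)) (-(1 / (1 - p0))) p0 := by
      have hin : HasDerivAt (fun x : ℝ => 1 - x) (-1) p0 := (hasDerivAt_id p0).const_sub 1
      have := (Real.hasDerivAt_log (ne_of_gt h1p)).comp p0 hin
      refine this.congr_deriv ?_
      ring
    have hl2 : HasDerivAt Real.log (1 / p0) p0 := by
      simpa [one_div] using Real.hasDerivAt_log (ne_of_gt h0)
    have := (hl1.sub hl2).sub_const (Real.log (1 - p0) - Real.log p0)
    exact this

lemma limC (p0 : ℝ) (h0 : 0 < p0) (h1 : p0 < 1) :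
    Filter.Tendsto (fun y => (Real.log (1 + Real.exp y) - p0 * y - hb p0) /
        (y - (Real.log p0 - Real.log (1 - p0))) ^ 2)
      (nhdsWithin (Real.log p0 - Real.log (1 - p0)) (Ioi (Real.log p0 - Real.log (1 - p0))))
      (nhds (p0 * (1 - p0) / 2)) := by
  have h1p : (0:ℝ) < 1 - p0 := by linarith
  have hexpL0 : Real.exp (Real.log p0 - Real.log (1 - p0)) = p0 / (1 - p0) := by
    rw [Real.exp_sub, Real.exp_log h0, Real.exp_log h1p]
  apply taylor2 (f' := fun y => Real.exp y / (1 + Real.exp y) - p0)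
  · filter_upwards with y
    have hey : (0:ℝ) < 1 + Real.exp y := by positivity
    have h1 : HasDerivAt (fun y : ℝ => Real.log (1 + Real.exp y))
        (Real.exp y / (1 + Real.exp y)) y := by
      have := (Real.hasDerivAt_log (ne_of_gt hey)).comp y ((Real.hasDerivAt_exp y).const_add 1)
      refine this.congr_deriv ?_
      field_simp
    have h2 : HasDerivAt (fun y : ℝ => p0 * y) p0 y := by
      simpa using (hasDerivAt_id y).const_mul p0
    exact (h1.sub h2).sub_const (hb p0)
  · rw [hexpL0]
    have h1t : (1:ℝ) + p0 / (1 - p0) = (1 - p0)⁻¹ := by field_simp; ring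
    rw [h1t, Real.log_inv]
    unfold hb
    ring
  · rw [hexpL0]
    field_simp
    ring
  · have hey : (0:ℝ) < 1 + Real.exp (Real.log p0 - Real.log (1 - p0)) := by positivity
    have hd := (Real.hasDerivAt_exp (Real.log p0 - Real.log (1 - p0))).div
      ((Real.hasDerivAt_exp (Real.log p0 - Real.log (1 - p0))).const_add 1) (ne_of_gt hey)
    have := hd.sub_const p0
    refine this.congr_deriv ?_
    rw [hexpL0]
    have h1t : (1:ℝ) + p0 / (1 - p0) = (1 - p0)⁻¹ := by field_simp; ring
    rw [h1t]
    field_simp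

lemma pdet_lt {τ Λ0 A : ℝ} (hτ : 0 < τ) (hΛ0 : 0 < Λ0) (hA : 0 < A) :
    pdet τ Λ0 < pdet τ (A + Λ0) := by
  unfold pdet
  have : Real.exp (-((A + Λ0) * τ)) < Real.exp (-(Λ0 * τ)) :=
    Real.exp_lt_exp.mpr (by nlinarith)
  linarith

lemma pdet_pos {τ x : ℝ} (hτ : 0 < τ) (hx : 0 < x) : 0 < pdet τ x := by
  unfold pdet
  have : Real.exp (-(x * τ)) < 1 := Real.exp_lt_one_iff.mpr (by nlinarith)
  linarith

lemma pdet_lt_one (τ x : ℝ) : pdet τ x < 1 := by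
  unfold pdet
  have := Real.exp_pos (-(x * τ))
  linarith

lemma Fcap_eq {τ A Λ0 : ℝ} (hτ : 0 < τ) (hΛ0 : 0 < Λ0) (hA : 0 < A) :
    Fcap τ A Λ0 (muStar τ A Λ0) =
      Real.log (1 + aCoef τ A Λ0) - pdet τ Λ0 * Real.log (aCoef τ A Λ0) -
        hb (pdet τ Λ0) := by
  have hε : 0 < pdet τ (A + Λ0) - pdet τ Λ0 := sub_pos.2 (pdet_lt hτ hΛ0 hA)
  have hε' : pdet τ (A + Λ0) - pdet τ Λ0 ≠ 0 := ne_of_gt hε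
  have ha : 0 < aCoef τ A Λ0 := Real.exp_pos _
  have h1a : 0 < 1 + aCoef τ A Λ0 := by positivity
  set a := aCoef τ A Λ0 with had
  set L : ℝ := Real.log a with hLd
  have haL : a = Real.exp L := (Real.exp_log ha).symm
  have hΔ : hb (pdet τ (A + Λ0)) - hb (pdet τ Λ0) =
      -L * (pdet τ (A + Λ0) - pdet τ Λ0) := by
    rw [hLd, had]
    unfold aCoef
    rw [Real.log_exp]
    field_simp
  have hmix : (1 - muStar τ A Λ0) * pdet τ Λ0 + muStar τ A Λ0 * pdet τ (A + Λ0) =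
      a / (1 + a) := by
    unfold muStar
    rw [← had]
    field_simp
    ring
  have hbt : hb (a / (1 + a)) = Real.log (1 + a) - (a / (1 + a)) * L := by
    have hlt : Real.log (a / (1 + a)) = L - Real.log (1 + a) := by
      rw [Real.log_div (ne_of_gt ha) (ne_of_gt h1a), hLd]
    have h1t : (1:ℝ) - a / (1 + a) = (1 + a)⁻¹ := by field_simp; ring
    unfold hb
    rw [hlt, h1t, Real.log_inv]
    field_simp
    ring
  have hμ : muStar τ A Λ0 = (a / (1 + a) - pdet τ Λ0) / (pdet τ (A + Λ0) - pdet τ Λ0) := by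
    unfold muStar
    rw [← had]
  unfold Fcap
  rw [hmix, hbt, hμ]
  have hb1 : hb (pdet τ (A + Λ0)) = hb (pdet τ Λ0) - L * (pdet τ (A + Λ0) - pdet τ Λ0) := by
    linarith [hΔ]
  rw [hb1]
  field_simp
  ring

lemma part1 (τ Λ0 : ℝ) (hτ : 0 < τ) (hΛ0 : 0 < Λ0) (dτ : ℝ)
    (hdτ : dτ = τ * (1 - pdet τ Λ0) / (8 * pdet τ Λ0)) :
    Filter.Tendsto
      (fun A : ℝ => ((1 / τ) * Fcap τ A Λ0 (muStar τ A Λ0) - dτ * A ^ 2) / A ^ 2)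
      (nhdsWithin 0 (Set.Ioi 0)) (nhds 0) := by
  have hτ' : τ ≠ 0 := ne_of_gt hτ
  set p := pdet τ Λ0 with hpd
  have hp0 : 0 < p := pdet_pos hτ hΛ0
  have hp1 : p < 1 := pdet_lt_one τ Λ0
  have h1p : 0 < 1 - p := by linarith
  set ε : ℝ → ℝ := fun A => pdet τ (A + Λ0) - p with hεd
  set L : ℝ → ℝ := fun A => Real.log (aCoef τ A Λ0) with hLd
  set L0 : ℝ := Real.log p - Real.log (1 - p) with hL0d
  set K : ℝ → ℝ := fun A => (L A - L0) / ε A with hKd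
  have hεpos : ∀ A : ℝ, 0 < A → 0 < ε A := by
    intro A hA
    rw [hεd]
    exact sub_pos.2 (pdet_lt hτ hΛ0 hA)
  have hεlim : Filter.Tendsto ε (nhdsWithin 0 (Ioi 0)) (nhdsWithin 0 (Ioi 0)) := by
    rw [tendsto_nhdsWithin_iff]
    constructor
    · have hc : Continuous ε := by
        rw [hεd]
        unfold pdet
        continuity
      have h := hc.tendsto 0
      have hε0 : ε 0 = 0 := by rw [hεd]; simp [hpd]
      rw [hε0] at h
      exact h.mono_left nhdsWithin_le_nhds
    · filter_upwards [self_mem_nhdsWithin] with A hA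
      exact hεpos A hA
  have h1pexp : 1 - p = Real.exp (-(Λ0 * τ)) := by
    rw [hpd]; unfold pdet; ring
  have hεA : Filter.Tendsto (fun A => ε A / A) (nhdsWithin 0 (Ioi 0))
      (nhds (τ * (1 - p))) := by
    apply slope_lim
    · have h1 : HasDerivAt (fun A : ℝ => -((A + Λ0) * τ)) (-τ) 0 := by
        have := (((hasDerivAt_id (0:ℝ)).add_const Λ0).mul_const τ).neg
        exact this.congr_deriv (by simp)
      have h2 := h1.exp
      have h4 := (h2.const_sub 1).sub_const p
      have h3 : HasDerivAt (fun A : ℝ => pdet τ (A + Λ0) - p) (τ * (1 - p)) 0 := by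
        have hfun : (fun A : ℝ => pdet τ (A + Λ0) - p) =
            fun A : ℝ => (1 - Real.exp (-((A + Λ0) * τ))) - p := rfl
        rw [hfun]
        refine h4.congr_deriv ?_
        rw [h1pexp]
        simp only [zero_add]
        ring
      rw [hεd]
      exact h3
    · rw [hεd]; simp [hpd]
  have hcomp : Filter.Tendsto (fun A => p + ε A) (nhdsWithin 0 (Ioi 0))
      (nhdsWithin p (Ioi p)) := by
    rw [tendsto_nhdsWithin_iff]
    constructor
    · have h := (tendsto_const_nhds (x := p) (f := nhdsWithin (0:ℝ) (Ioi 0))).add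
        (hεlim.mono_right nhdsWithin_le_nhds)
      simpa using h
    · filter_upwards [(tendsto_nhdsWithin_iff.mp hεlim).2] with A hA
      exact lt_add_of_pos_right p hA
  have hLε : ∀ A : ℝ, 0 < A → L A = -((hb (pdet τ (A + Λ0)) - hb p) / ε A) := by
    intro A hA
    rw [hLd]
    show Real.log (aCoef τ A Λ0) = _
    unfold aCoef
    rw [Real.log_exp]
  have hKlim : Filter.Tendsto K (nhdsWithin 0 (Ioi 0))
      (nhds ((1 / (1 - p) + 1 / p) / 2)) := by
    have h := ((limB p hp0 hp1).comp hcomp).neg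
    have hval : -((-(1 / (1 - p)) - 1 / p) / 2) = (1 / (1 - p) + 1 / p) / 2 := by ring
    rw [hval] at h
    refine h.congr' ?_
    filter_upwards [self_mem_nhdsWithin] with A hA
    have hε' : ε A ≠ 0 := ne_of_gt (hεpos A hA)
    have hpe : p + ε A = pdet τ (A + Λ0) := by rw [hεd]; ring
    show -((hb (p + ε A) - hb p - (p + ε A - p) * (Real.log (1 - p) - Real.log p)) /
        (p + ε A - p) ^ 2) = K A
    rw [add_sub_cancel_left, hpe, hKd]
    show _ = (L A - L0) / ε A
    rw [hLε A hA, hL0d]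
    field_simp
    ring
  have hKpos : ∀ᶠ A in nhdsWithin (0:ℝ) (Ioi 0), 0 < K A := by
    refine hKlim.eventually (eventually_gt_nhds ?_)
    have h1 := one_div_pos.mpr h1p
    have h2 := one_div_pos.mpr hp0
    linarith
  have hLK : ∀ᶠ A in nhdsWithin (0:ℝ) (Ioi 0), L A = L0 + K A * ε A := by
    filter_upwards [self_mem_nhdsWithin] with A hA
    have hε' : ε A ≠ 0 := ne_of_gt (hεpos A hA)
    rw [hKd]
    field_simp
    ring
  have hLtend : Filter.Tendsto L (nhdsWithin 0 (Ioi 0)) (nhdsWithin L0 (Ioi L0)) := by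
    rw [tendsto_nhdsWithin_iff]
    constructor
    · have h := (tendsto_const_nhds (x := L0) (f := nhdsWithin (0:ℝ) (Ioi 0))).add
        (hKlim.mul (hεlim.mono_right nhdsWithin_le_nhds))
      rw [mul_zero, add_zero] at h
      exact h.congr' (by filter_upwards [hLK] with A h'; exact h'.symm)
    · filter_upwards [hLK, hKpos, (tendsto_nhdsWithin_iff.mp hεlim).2] with A h1 h2 h3
      rw [mem_Ioi, h1]
      nlinarith [mul_pos h2 h3]
  have hΨ : Filter.Tendsto
      (fun A => (Real.log (1 + Real.exp (L A)) - p * L A - hb p) / (L A - L0) ^ 2)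
      (nhdsWithin 0 (Ioi 0)) (nhds (p * (1 - p) / 2)) := by
    have h := (limC p hp0 hp1).comp (by rw [hL0d] at hLtend; exact hLtend)
    exact h
  have hmain : Filter.Tendsto (fun A : ℝ => Fcap τ A Λ0 (muStar τ A Λ0) / A ^ 2)
      (nhdsWithin 0 (Ioi 0))
      (nhds (p * (1 - p) / 2 * ((1 / (1 - p) + 1 / p) / 2 * ((1 / (1 - p) + 1 / p) / 2)) *
        (τ * (1 - p) * (τ * (1 - p))))) := by
    have h := (hΨ.mul (hKlim.mul hKlim)).mul (hεA.mul hεA)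
    refine h.congr' ?_
    filter_upwards [self_mem_nhdsWithin, hKpos] with A hA hKp
    have hε' : ε A ≠ 0 := ne_of_gt (hεpos A hA)
    have hA' : A ≠ 0 := ne_of_gt hA
    have hK' : K A ≠ 0 := ne_of_gt hKp
    have haC : Real.exp (L A) = aCoef τ A Λ0 := by
      rw [hLd]
      exact Real.exp_log (Real.exp_pos _)
    have hLL0 : L A - L0 = K A * ε A := by rw [hKd]; field_simp
    have hFeq := Fcap_eq (τ := τ) (A := A) (Λ0 := Λ0) hτ hΛ0 hA
    rw [← hpd] at hFeq
    have hLA2 : L A = Real.log (aCoef τ A Λ0) := by rw [hLd]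
    show (Real.log (1 + Real.exp (L A)) - p * L A - hb p) / (L A - L0) ^ 2 *
        (K A * K A) * (ε A / A * (ε A / A)) = Fcap τ A Λ0 (muStar τ A Λ0) / A ^ 2
    rw [hLL0, haC, hFeq, hLA2]
    field_simp
  have h2 := (hmain.const_mul (1 / τ)).sub_const dτ
  have hval : 1 / τ *
      (p * (1 - p) / 2 * ((1 / (1 - p) + 1 / p) / 2 * ((1 / (1 - p) + 1 / p) / 2)) *
        (τ * (1 - p) * (τ * (1 - p)))) - dτ = 0 := by
    rw [hdτ]
    field_simp
    ring
  rw [hval] at h2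
  refine h2.congr' ?_
  filter_upwards [self_mem_nhdsWithin] with A hA
  have hA' : A ≠ 0 := ne_of_gt hA
  show 1 / τ * (Fcap τ A Λ0 (muStar τ A Λ0) / A ^ 2) - dτ = _
  field_simp

end AuxCapacity

/-- for fixed τ > 0 and Λ0 > 0, as A → 0⁺ the non-perfect receiver
capacity satisfies (1/τ)·F(μ*(A)) = d_τ·A² + o(A²) with
d_τ = τ·(1−p(Λ0))/(8·p(Λ0)); and the continuous Poisson capacity
C_Poi(A) = A·[q*·(1+s)·ln(1+s) + (1−q*)·s·ln s − (q*+s)·ln(q*+s)], with s = Λ0/A and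
q* = (1+s)^{1+s}/(s^s·e) − s, satisfies C_Poi(A) = A²/(8·Λ0) + o(A²). -/

theorem capacity_lowPeakPower (τ Λ0 : ℝ) (hτ : 0 < τ) (hΛ0 : 0 < Λ0)
    (dτ : ℝ) (hdτ : dτ = τ * (1 - pdet τ Λ0) / (8 * pdet τ Λ0))
    (CPoi : ℝ → ℝ)
    (hCPoi : ∀ A : ℝ,
      CPoi A =
        A * (((1 + Λ0 / A) ^ (1 + Λ0 / A) / ((Λ0 / A) ^ (Λ0 / A) * Real.exp 1) - Λ0 / A) *
              (1 + Λ0 / A) * Real.log (1 + Λ0 / A) +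
            (1 - ((1 + Λ0 / A) ^ (1 + Λ0 / A) / ((Λ0 / A) ^ (Λ0 / A) * Real.exp 1) -
              Λ0 / A)) * (Λ0 / A) * Real.log (Λ0 / A) -
            (((1 + Λ0 / A) ^ (1 + Λ0 / A) / ((Λ0 / A) ^ (Λ0 / A) * Real.exp 1) - Λ0 / A) +
              Λ0 / A) *
              Real.log (((1 + Λ0 / A) ^ (1 + Λ0 / A) / ((Λ0 / A) ^ (Λ0 / A) * Real.exp 1) -
                Λ0 / A) + Λ0 / A))) :
    Filter.Tendsto
        (fun A : ℝ => ((1 / τ) * Fcap τ A Λ0 (muStar τ A Λ0) - dτ * A ^ 2) / A ^ 2)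
        (nhdsWithin 0 (Set.Ioi 0)) (nhds 0) ∧
      Filter.Tendsto (fun A : ℝ => (CPoi A - A ^ 2 / (8 * Λ0)) / A ^ 2)
        (nhdsWithin 0 (Set.Ioi 0)) (nhds 0) :=
  ⟨part1 τ Λ0 hτ hΛ0 dτ hdτ, part2 Λ0 hΛ0 CPoi hCPoi⟩
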